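/- Let M(k) be a matrix-valued function analytic near k₀ with M(k₀) singular, and suppose there exists a matrix-valued analytic function N(k) = M(k)⁻¹ near k₀ with Laurent expansion. If for every nonzero a with M(k₀)a = 0 and every b the relation M(k₀)b + M'(k₀)a = 0 implies a = 0, then M(k)⁻¹ has at most a simple pole at k₀: i.e., (k − k₀)·M(k)⁻¹ is bounded near k₀. -/

import Mathlib

/-!
Since `M(k)⁻¹ = adj M(k) / det M(k)` and `det M` has a zero of finite order at `k₀`, the
function `(k - k₀)^q M(k)⁻¹` extends analytically across `k₀` for some `q`. If it does so for
`q + 2`, with extension `H`, then `M H = (k - k₀)^(q+2) I`; evaluating this identity and its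
derivative at `k₀` shows that every column `a` of `H(k₀)`, with the corresponding column `b` of
`H'(k₀)`, satisfies `M(k₀) a = 0` and `M(k₀) b + M'(k₀) a = 0`. Hence `H(k₀) = 0`, so `k - k₀`
divides `H` and the exponent drops to `q + 1`. Descending to `q = 1`, the analytic extension of
`(k - k₀) M(k)⁻¹` is bounded near `k₀`.
-/

open Matrix Filter Topology

section

variable {𝕜 : Type*} [NontriviallyNormedField 𝕜]

theorem AnalyticAt.dslope {E : Type*} [NormedAddCommGroup E] [NormedSpace 𝕜 E] {f : 𝕜 → E}
    {z : 𝕜} (hf : AnalyticAt 𝕜 f z) : AnalyticAt 𝕜 (dslope f z) z :=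
  let ⟨_, hp⟩ := hf
  ⟨_, hp.has_fpower_series_dslope_fslope⟩

theorem hasDerivAt_mulVec {m n : Type*} [Fintype m] [Fintype n] {M : 𝕜 → Matrix m n 𝕜}
    {M' : Matrix m n 𝕜} {v : 𝕜 → n → 𝕜} {v' : n → 𝕜} {z : 𝕜}
    (hM : ∀ i j, HasDerivAt (fun k => M k i j) (M' i j) z) (hv : HasDerivAt v v' z) :
    HasDerivAt (fun k => M k *ᵥ v k) (M' *ᵥ v z + M z *ᵥ v') z := by
  refine hasDerivAt_pi.2 fun i => ?_
  simp only [mulVec, dotProduct, Pi.add_apply, ← Finset.sum_add_distrib]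
  exact HasDerivAt.fun_sum fun l _ => (hM i l).mul (hasDerivAt_pi.1 hv l)

variable {ι : Type*} [Fintype ι] {M : 𝕜 → Matrix ι ι 𝕜} {z : 𝕜}

theorem eq_zero_of_mulVec_eventuallyEq_pow_smul {M' : Matrix ι ι 𝕜} {v : 𝕜 → ι → 𝕜}
    {c : ι → 𝕜} {q : ℕ} (hM' : ∀ i j, HasDerivAt (fun k => M k i j) (M' i j) z)
    (hcrit : ∀ a b : ι → 𝕜, M z *ᵥ a = 0 → M z *ᵥ b + M' *ᵥ a = 0 → a = 0)
    (hv : DifferentiableAt 𝕜 v z)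
    (h : ∀ᶠ k in 𝓝[≠] z, M k *ᵥ v k = (k - z) ^ (q + 2) • c) : v z = 0 := by
  have hlhs := hasDerivAt_mulVec hM' hv.hasDerivAt
  have hrhs : HasDerivAt (fun k => (k - z) ^ (q + 2) • c)
      (((q + 2 : ℕ) * (z - z) ^ (q + 1) * 1) • c) z :=
    (((hasDerivAt_id z).sub_const z).pow (q + 2)).smul_const c
  have heq := (hlhs.continuousAt.eventuallyEq_nhds_iff_eventuallyEq_nhdsNE
    hrhs.continuousAt).mp h
  refine hcrit (v z) (deriv v z) ?_ ?_
  · simpa using heq.eq_of_nhds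
  · simpa [add_comm] using hlhs.unique (hrhs.congr_of_eventuallyEq heq)

variable [DecidableEq ι]

theorem analyticAt_det {A : 𝕜 → Matrix ι ι 𝕜}
    (hA : ∀ i j, AnalyticAt 𝕜 (fun k => A k i j) z) :
    AnalyticAt 𝕜 (fun k => (A k).det) z := by
  simp only [Matrix.det_apply']
  exact Finset.analyticAt_fun_sum _ fun σ _ =>
    analyticAt_const.mul (Finset.analyticAt_fun_prod _ fun i _ => hA (σ i) i)

theorem analyticAt_adjugate {A : 𝕜 → Matrix ι ι 𝕜}
    (hA : ∀ i j, AnalyticAt 𝕜 (fun k => A k i j) z) (i j : ι) :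
    AnalyticAt 𝕜 (fun k => (A k).adjugate i j) z := by
  simp only [Matrix.adjugate_apply]
  refine analyticAt_det fun a b => ?_
  by_cases ha : a = j
  · simp only [ha, updateRow_self, analyticAt_const]
  · simpa only [updateRow_ne ha] using hA a b

def InvPoleOrderLE (M : 𝕜 → Matrix ι ι 𝕜) (z : 𝕜) (q : ℕ) : Prop :=
  ∃ H : 𝕜 → Matrix ι ι 𝕜, (∀ i j, AnalyticAt 𝕜 (fun k => H k i j) z) ∧
    ∀ᶠ k in 𝓝[≠] z, H k = (k - z) ^ q • (M k)⁻¹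

theorem exists_invPoleOrderLE (hM : ∀ i j, AnalyticAt 𝕜 (fun k => M k i j) z)
    (hinv : ∀ᶠ k in 𝓝[≠] z, IsUnit (M k)) : ∃ q, InvPoleOrderLE M z q := by
  have hdet : ∀ᶠ k in 𝓝[≠] z, (M k).det ≠ 0 := by
    filter_upwards [hinv] with k hk
    exact ((isUnit_iff_isUnit_det _).mp hk).ne_zero
  have hnz : ¬∀ᶠ k in 𝓝 z, (M k).det = 0 := fun h =>
    let ⟨_, hk0, hk⟩ := ((h.filter_mono nhdsWithin_le_nhds).and hdet).exists
    hk hk0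
  obtain ⟨q, g, hg, hgz, hdet_eq⟩ :=
    (analyticAt_det hM).exists_eventuallyEq_pow_smul_nonzero_iff.mpr hnz
  refine ⟨q, fun k => (g k)⁻¹ • (M k).adjugate,
    fun i j => (hg.inv hgz).mul (analyticAt_adjugate hM i j), ?_⟩
  filter_upwards [hdet_eq.filter_mono nhdsWithin_le_nhds, hdet, self_mem_nhdsWithin]
    with k hk hdk hne
  have hkz : k - z ≠ 0 := sub_ne_zero.mpr hne
  have hgk : g k ≠ 0 := by rintro hgk; simp [hk, hgk] at hdk
  rw [Matrix.inv_def, Ring.inverse_eq_inv, hk, smul_smul, smul_eq_mul]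
  congr 1
  field_simp

theorem InvPoleOrderLE.mono {q r : ℕ} (h : InvPoleOrderLE M z q) (hqr : q ≤ r) :
    InvPoleOrderLE M z r := by
  obtain ⟨H, hH, hHM⟩ := h
  refine ⟨fun k => (k - z) ^ (r - q) • H k,
    fun i j => ((analyticAt_id.sub analyticAt_const).pow _).mul (hH i j), ?_⟩
  filter_upwards [hHM] with k hk
  rw [hk, smul_smul, ← pow_add, Nat.sub_add_cancel hqr]

theorem InvPoleOrderLE.of_add_two {M' : Matrix ι ι 𝕜} {q : ℕ}
    (hM' : ∀ i j, HasDerivAt (fun k => M k i j) (M' i j) z)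
    (hinv : ∀ᶠ k in 𝓝[≠] z, IsUnit (M k))
    (hcrit : ∀ a b : ι → 𝕜, M z *ᵥ a = 0 → M z *ᵥ b + M' *ᵥ a = 0 → a = 0)
    (h : InvPoleOrderLE M z (q + 2)) : InvPoleOrderLE M z (q + 1) := by
  obtain ⟨H, hH, hHM⟩ := h
  have hcol : ∀ j, H z *ᵥ Pi.single j 1 = 0 := fun j => by
    refine eq_zero_of_mulVec_eventuallyEq_pow_smul (v := fun k => H k *ᵥ Pi.single j 1)
      (c := Pi.single j 1) (q := q) hM' hcrit ?_ ?_
    · simp only [mulVec_single_one]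
      exact (analyticAt_pi_iff.2 fun l => hH l j).differentiableAt
    · filter_upwards [hHM, hinv] with k hk hu
      rw [mulVec_mulVec, hk, Matrix.mul_smul, mul_nonsing_inv _ ((isUnit_iff_isUnit_det _).mp hu),
        smul_mulVec, one_mulVec]
  have hHz : ∀ i j, H z i j = 0 := fun i j => by
    simpa [mulVec_single_one] using congrFun (hcol j) i
  refine ⟨fun k => Matrix.of fun i j => dslope (fun k => H k i j) z k,
    fun i j => (hH i j).dslope, ?_⟩
  filter_upwards [hHM, self_mem_nhdsWithin] with k hk hne
  have hkz : k - z ≠ 0 := sub_ne_zero.mpr hne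
  ext i j
  have := sub_smul_dslope (fun k => H k i j) z k
  simp only [hk, hHz, sub_zero, smul_eq_mul, Matrix.smul_apply] at this
  rw [pow_succ', mul_assoc] at this
  simpa using mul_left_cancel₀ hkz this

theorem invPoleOrderLE_one {M' : Matrix ι ι 𝕜}
    (hM' : ∀ i j, HasDerivAt (fun k => M k i j) (M' i j) z)
    (hinv : ∀ᶠ k in 𝓝[≠] z, IsUnit (M k))
    (hcrit : ∀ a b : ι → 𝕜, M z *ᵥ a = 0 → M z *ᵥ b + M' *ᵥ a = 0 → a = 0) :
    ∀ q, InvPoleOrderLE M z q → InvPoleOrderLE M z 1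
  | 0, h => h.mono zero_le_one
  | 1, h => h
  | q + 2, h => invPoleOrderLE_one hM' hinv hcrit (q + 1) (h.of_add_two hM' hinv hcrit)

theorem InvPoleOrderLE.exists_bound (h : InvPoleOrderLE M z 1) :
    ∃ C > (0 : ℝ), ∀ᶠ k in 𝓝[≠] z, ∀ i j, ‖(k - z) * (M k)⁻¹ i j‖ ≤ C := by
  obtain ⟨H, hH, hHM⟩ := h
  have hcont : ContinuousAt (fun k => (fun i j => H k i j : ι → ι → 𝕜)) z :=
    continuousAt_pi.2 fun i => continuousAt_pi.2 fun j => (hH i j).continuousAt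
  refine ⟨‖(fun i j => H z i j : ι → ι → 𝕜)‖ + 1, by positivity, ?_⟩
  filter_upwards [(hcont.norm.eventually_lt_const (lt_add_one _)).filter_mono nhdsWithin_le_nhds,
    hHM] with k hk hHk i j
  calc ‖(k - z) * (M k)⁻¹ i j‖ = ‖H k i j‖ := by simp [hHk]
    _ ≤ ‖(fun i j => H k i j : ι → ι → 𝕜)‖ :=
      (norm_le_pi_norm (fun j => H k i j) j).trans (norm_le_pi_norm (fun i j => H k i j) i)
    _ ≤ _ := hk.le

end

/-- if `M` is analytic (entrywise) near `k₀`, invertible in a punctured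
neighbourhood, and the only solution of `M(k₀)a = 0`, `M(k₀)b + M'(k₀)a = 0` is `a = 0`,
then `M(k)⁻¹` has at most a simple pole at `k₀`: `(k − k₀) M(k)⁻¹` is bounded near `k₀`. -/
theorem stmt9 {n : ℕ} (M : ℂ → Matrix (Fin n) (Fin n) ℂ) (k₀ : ℂ)
    (M' : Matrix (Fin n) (Fin n) ℂ)
    (hM : ∀ i j, AnalyticAt ℂ (fun k => M k i j) k₀)
    (hM' : ∀ i j, HasDerivAt (fun k => M k i j) (M' i j) k₀)
    (hinv : ∀ᶠ k in nhdsWithin k₀ {k₀}ᶜ, IsUnit (M k))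
    (hcrit : ∀ a b : Fin n → ℂ, (M k₀).mulVec a = 0 →
      (M k₀).mulVec b + M'.mulVec a = 0 → a = 0) :
    ∃ C > (0:ℝ), ∃ ε > (0:ℝ), ∀ k, k ≠ k₀ → ‖k - k₀‖ < ε →
      ∀ i j, ‖(k - k₀) * (M k)⁻¹ i j‖ ≤ C := by
  obtain ⟨q, hq⟩ := exists_invPoleOrderLE hM hinv
  obtain ⟨C, hC, hbound⟩ := (invPoleOrderLE_one hM' hinv hcrit q hq).exists_bound
  obtain ⟨ε, hε, hball⟩ := Metric.eventually_nhds_iff.mp (eventually_nhdsWithin_iff.mp hbound)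
  exact ⟨C, hC, ε, hε, fun k hk hkε => hball (by rwa [dist_eq_norm]) hk⟩
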